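/- For each i ∈ {1,…,5}, the matrix M_i (where M₁ = [[7,−6,6],[8,−7,7],[4,−4,3]], M₂ = [[7,6,−6],[8,7,−7],[4,3,−4]], M₃ = [[7,6,0],[8,7,0],[4,3,1]], M₄ = [[7,0,6],[8,0,7],[4,1,3]], M₅ = [[7,0,−6],[8,0,−7],[4,1,−4]]) preserves the Eisenstein quadratic form: if integers a, b, c satisfy a² = b² + c² − bc and (a', b', c')ᵗ = M_i · (a, b, c)ᵗ, then a'² = b'² + c'² − b'c'. -/

import Mathlib

open Matrix

/-!
Each `Mᵢ` is an automorph of the Gram matrix `G` of the form `2 (b² + c² - bc - a²)`, i.e.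
`Mᵢᵀ G Mᵢ = G`, and an automorph of a Gram matrix preserves the quadratic form `v ⬝ᵥ G v`.
-/

/-- The five matrices `M₁, …, M₅`. -/
def Mmat : Fin 5 → Matrix (Fin 3) (Fin 3) ℤ
  | 0 => !![7, -6, 6; 8, -7, 7; 4, -4, 3]
  | 1 => !![7, 6, -6; 8, 7, -7; 4, 3, -4]
  | 2 => !![7, 6, 0; 8, 7, 0; 4, 3, 1]
  | 3 => !![7, 0, 6; 8, 0, 7; 4, 1, 3]
  | 4 => !![7, 0, -6; 8, 0, -7; 4, 1, -4]

theorem Matrix.dotProduct_mulVec_mulVec_of_transpose_mul_mul_eq {n R : Type*} [Fintype n]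
    [CommSemiring R] {M G : Matrix n n R} (hM : Mᵀ * G * M = G) (v : n → R) :
    M *ᵥ v ⬝ᵥ (G *ᵥ (M *ᵥ v)) = v ⬝ᵥ (G *ᵥ v) :=
  calc M *ᵥ v ⬝ᵥ (G *ᵥ (M *ᵥ v)) = v ⬝ᵥ (Mᵀ *ᵥ (G *ᵥ (M *ᵥ v))) := by
        rw [dotProduct_mulVec v, vecMul_transpose]
    _ = v ⬝ᵥ ((Mᵀ * G * M) *ᵥ v) := by rw [mulVec_mulVec, mulVec_mulVec]
    _ = v ⬝ᵥ (G *ᵥ v) := by rw [hM]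

def eisensteinGram : Matrix (Fin 3) (Fin 3) ℤ :=
  !![-2, 0, 0; 0, 2, -1; 0, -1, 2]

theorem dotProduct_eisensteinGram_mulVec (a b c : ℤ) :
    ![a, b, c] ⬝ᵥ (eisensteinGram *ᵥ ![a, b, c]) = 2 * (b ^ 2 + c ^ 2 - b * c - a ^ 2) := by
  simp only [eisensteinGram, vec3_dotProduct, mulVec, of_apply, cons_val]
  ring

theorem Mmat_transpose_mul_eisensteinGram_mul (i : Fin 5) :
    (Mmat i)ᵀ * eisensteinGram * Mmat i = eisensteinGram := by
  fin_cases i <;> decide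

/-- each `Mᵢ` preserves the Eisenstein quadratic form: if
`a² = b² + c² − bc` and `(a', b', c')ᵗ = Mᵢ · (a, b, c)ᵗ`, then
`a'² = b'² + c'² − b'c'`. -/
theorem Mmat_preserves_eisenstein_form (i : Fin 5) (a b c a' b' c' : ℤ)
    (h : a ^ 2 = b ^ 2 + c ^ 2 - b * c)
    (h' : (Mmat i).mulVec ![a, b, c] = ![a', b', c']) :
    a' ^ 2 = b' ^ 2 + c' ^ 2 - b' * c' := by
  have hform := dotProduct_mulVec_mulVec_of_transpose_mul_mul_eq
    (Mmat_transpose_mul_eisensteinGram_mul i) ![a, b, c]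
  rw [h', dotProduct_eisensteinGram_mulVec, dotProduct_eisensteinGram_mulVec] at hform
  linarith
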